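/- For every seed S of type (4,1), the second iterate of the seed map is projectively equivalent to the identity: there exists a projective transformation g of ℝP² carrying each point of S (embedded in ℝP² via ℝ²) to the corresponding point of T_{4,1}²(S), i.e. g(A_i) equals the i-th A-point of T_{4,1}²(S) for i = 1,…,4 and g(B_4) equals the B-point of T_{4,1}²(S). (T_{4,1}² is the identity on the space C(4,1) of projective classes of seeds of type (4,1).) -/

import Mathlib

/-!
In homogeneous coordinates `uᵢ = (Aᵢ, 1)` the vertices of a quadrilateral satisfy Cramer's
relation `x u₁ - y u₂ + z u₃ - w u₄ = 0`, whose coefficients are oriented areas of the four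
triangles; for a convex quadrilateral they are all positive. On `(A, B)` the second iterate
of `T_{4,1}` is `A₁ A₂ A₃ A₄ B₄ ↦ A₃ A₄ B₄ C D`, where `C = A₁A₃ ∩ A₂B₄` and, because `C` lies on
`A₁A₃`, `D = A₂A₄ ∩ CA₃` is the intersection of the diagonals. Sending the basis `u₁, u₂, u₃`
to suitable multiples of `u₃, u₄, B₄` defines a linear map; Cramer's relation then forces the
images of `u₄` and of `B₄` to be multiples of `C` and `D`.
-/

/-- Planar determinant (cross product) of two vectors of `ℝ²`. -/
def det2 (u v : ℝ × ℝ) : ℝ := u.1 * v.2 - u.2 * v.1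

/-- Counterclockwise orientation of an ordered triple of points of `ℝ²`. -/
def ccw (a b c : ℝ × ℝ) : Prop := 0 < det2 (b - a) (c - a)

/-- The (1-indexed) points `A 1, …, A n` are in strictly convex position in this
(counterclockwise) cyclic order: every triple taken in cyclic order is
counterclockwise. -/
def ConvexCyc (n : ℕ) (A : ℕ → ℝ × ℝ) : Prop :=
  ∀ i j l : ℕ, 1 ≤ i → i < j → j < l → l ≤ n → ccw (A i) (A j) (A l)

/-- A seed of type `(n,k)`: the points `A 1, …, A n` are in strictly convex position
in counterclockwise cyclic order, and for `j = n-k+1, …, n` the point `B j` lies in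
the open segment between `A j` and `A (j+1)` (indices mod `n`, so `A (n+1) = A 1`;
note `j % n + 1` equals `j + 1` for `j < n` and equals `1` for `j = n`).
Only the values `A 1, …, A n` and `B (n-k+1), …, B n` are relevant. -/
def IsSeed (n k : ℕ) (A B : ℕ → ℝ × ℝ) : Prop :=
  ConvexCyc n A ∧
    ∀ j : ℕ, n - k + 1 ≤ j → j ≤ n →
      ∃ t ∈ Set.Ioo (0 : ℝ) 1, B j = A j + t • (A (j % n + 1) - A j)

/-- The point `p` lies on the line through `a` and `b`. -/
def onLine (a b p : ℝ × ℝ) : Prop := det2 (b - a) (p - a) = 0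

/-- The intersection point of the line through `a`, `b` with the line through
`c`, `d` (when the two lines are non-parallel). -/
noncomputable def lineInter (a b c d : ℝ × ℝ) : ℝ × ℝ :=
  a + (det2 (c - a) (d - c) / det2 (b - a) (d - c)) • (b - a)

/-- Auxiliary descending recursion producing the points `B*`: `BstAux n A Astar d`
is the point `B*_(n-d)`.  For `d = 0`, `B*_n` is the intersection of the line
through `A 1` and `A*_2` with the line through `A*_n` and `A*_1`; descending,
`B*_j` (`j = n - d - 1`) is the intersection of the line through `A (j+1)` and
`B*_(j+1)` with the line through `A*_j` and `A*_(j+1)`. -/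
noncomputable def BstAux (n : ℕ) (A Astar : ℕ → ℝ × ℝ) : ℕ → ℝ × ℝ
  | 0 => lineInter (A 1) (Astar 2) (Astar n) (Astar 1)
  | d + 1 => lineInter (A (n - d)) (BstAux n A Astar d) (Astar (n - d - 1)) (Astar (n - d))

/-- The seed map `T_{n,k}`, sending the configuration `(A, B)` to `(A*, B*)`:
`A*_i = A_(i+1)` for `i = 1, …, n-k`; `A*_i = B_i` for `i = n-k+1, …, n`; and the
points `B*_j`, `j = n, n-1, …, n-k+1`, are produced by the descending intersection
recursion `BstAux`. -/
noncomputable def seedMap (n k : ℕ) (S : (ℕ → ℝ × ℝ) × (ℕ → ℝ × ℝ)) :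
    (ℕ → ℝ × ℝ) × (ℕ → ℝ × ℝ) :=
  let Astar : ℕ → ℝ × ℝ := fun i => if i ≤ n - k then S.1 (i + 1) else S.2 i
  (Astar, fun j => BstAux n S.1 Astar (n - j))

/-- The real projective plane, as the projectivization of `ℝ³`. -/
abbrev P2 := Projectivization ℝ (Fin 3 → ℝ)

/-- The standard embedding `ℝ² → ℝP²`, `(x,y) ↦ [x:y:1]`. -/
noncomputable def emb (p : ℝ × ℝ) : P2 :=
  Projectivization.mk ℝ ![p.1, p.2, 1] (by
    intro h
    have h2 := congrFun h 2
    simp at h2)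

/-- The projective transformation of `ℝP²` induced by an invertible linear map of `ℝ³`. -/
noncomputable def pmap (g : (Fin 3 → ℝ) ≃ₗ[ℝ] (Fin 3 → ℝ)) : P2 → P2 :=
  Projectivization.map g.toLinearMap g.injective


def homog (p : ℝ × ℝ) : Fin 3 → ℝ := ![p.1, p.2, 1]

def orient (a b c : ℝ × ℝ) : ℝ := det2 (b - a) (c - a)

theorem homog_ne_zero (p : ℝ × ℝ) : homog p ≠ 0 := fun h => by
  simpa [homog] using congrFun h 2

theorem pmap_emb_eq_of_smul_apply (g : (Fin 3 → ℝ) ≃ₗ[ℝ] (Fin 3 → ℝ)) {p q : ℝ × ℝ}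
    {r s : ℝ} (hr : r ≠ 0) (h : r • g (homog p) = s • homog q) : pmap g (emb p) = emb q := by
  have hg : g (homog p) = (r⁻¹ * s) • homog q := by rw [mul_smul, ← h, inv_smul_smul₀ hr]
  exact (Projectivization.mk_eq_mk_iff' ℝ _ _
    ((map_ne_zero_iff g g.injective).2 (homog_ne_zero p)) (homog_ne_zero q)).2 ⟨_, hg.symm⟩

theorem homog_add_smul_sub (p q : ℝ × ℝ) (t : ℝ) :
    homog (p + t • (q - p)) = (1 - t) • homog p + t • homog q := by
  ext i; fin_cases i <;> simp [homog] <;> ring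

theorem orient_swap (a b c : ℝ × ℝ) : orient a c b = -orient a b c := by
  simp only [orient, det2]; ring

theorem orient_alternating_sum (a b c d : ℝ × ℝ) :
    orient b c d - orient a c d + orient a b d - orient a b c = 0 := by
  simp only [orient, det2, Prod.fst_sub, Prod.snd_sub]; ring

theorem orient_smul_homog_alternating_sum (a b c d : ℝ × ℝ) :
    orient b c d • homog a - orient a c d • homog b + orient a b d • homog c
      - orient a b c • homog d = 0 := by
  ext i; fin_cases i <;> simp [homog, orient, det2] <;> ring

theorem linearIndependent_homog {a b c : ℝ × ℝ} (h : orient a b c ≠ 0) :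
    LinearIndependent ℝ ![homog a, homog b, homog c] := by
  have hdet : (Matrix.of ![homog a, homog b, homog c]).det = orient a b c := by
    simp [Matrix.det_fin_three, homog, orient, det2]; ring
  exact Matrix.linearIndependent_rows_of_det_ne_zero (hdet ▸ h)

theorem smul_homog_lineInter {a b c d : ℝ × ℝ} {α β γ δ : ℝ}
    (h : α • homog a + β • homog b = γ • homog c + δ • homog d) (hαβ : α + β ≠ 0)
    (hd : orient a b d ≠ 0) :
    (α + β) • homog (lineInter a b c d) = α • homog a + β • homog b := by
  have e₁ : α * a.1 + β * b.1 = γ * c.1 + δ * d.1 := by simpa [homog] using congrFun h 0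
  have e₂ : α * a.2 + β * b.2 = γ * c.2 + δ * d.2 := by simpa [homog] using congrFun h 1
  have e₃ : α + β = γ + δ := by simpa [homog] using congrFun h 2
  have horient : (α + β) * orient a b d = γ * det2 (b - a) (d - c) := by
    simp only [orient, det2, Prod.fst_sub, Prod.snd_sub]
    linear_combination (b.1 - a.1) * (d.2 * e₃ - e₂) - (b.2 - a.2) * (d.1 * e₃ - e₁)
  have hnonpar : det2 (b - a) (d - c) ≠ 0 := right_ne_zero_of_mul (horient ▸ mul_ne_zero hαβ hd)
  have hN : (α + β) * det2 (c - a) (d - c) = β * det2 (b - a) (d - c) := by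
    simp only [det2, Prod.fst_sub, Prod.snd_sub]
    linear_combination (c.1 * e₃ - e₁) * (d.2 - c.2) - (c.2 * e₃ - e₂) * (d.1 - c.1)
  have hr : (α + β) * (det2 (c - a) (d - c) / det2 (b - a) (d - c)) = β := by
    rw [← mul_div_assoc, hN, mul_div_cancel_right₀ _ hnonpar]
  rw [lineInter, homog_add_smul_sub]
  linear_combination (norm := module) hr • (homog b - homog a)

theorem exists_linearEquiv_apply_eq_smul {K V ι : Type*} [Field K] [AddCommGroup V]
    [Module K V] [FiniteDimensional K V] [Fintype ι] {v w : ι → V}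
    (hv : LinearIndependent K v) (hw : LinearIndependent K w)
    (hcard : Fintype.card ι = Module.finrank K V) (c : ι → K) (hc : ∀ i, c i ≠ 0) :
    ∃ g : V ≃ₗ[K] V, ∀ i, g (v i) = c i • w i := by
  let u : ι → Kˣ := fun i => Units.mk0 (c i) (hc i)
  let bv := basisOfLinearIndependentOfCardEqFinrank' v hv hcard
  let bw := basisOfLinearIndependentOfCardEqFinrank' (u • w) (hw.units_smul u) hcard
  refine ⟨bv.equiv bw (Equiv.refl ι), fun i => ?_⟩
  simpa [bv, bw, u] using bv.equiv_apply i bw (Equiv.refl ι)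

section Quadrilateral

variable {a₁ a₂ a₃ a₄ b : ℝ × ℝ} {t : ℝ}

theorem smul_homog_lineInter_side (hb : homog b = (1 - t) • homog a₄ + t • homog a₁)
    (h₁₃₄ : 0 < orient a₁ a₃ a₄) (h₁₂₃ : 0 < orient a₁ a₂ a₃) (ht : t < 1) :
    (orient a₁ a₂ a₃ + (1 - t) * orient a₁ a₃ a₄) • homog (lineInter a₁ a₃ b a₂) =
      ((1 - t) * orient a₂ a₃ a₄ + t * orient a₁ a₂ a₃) • homog a₁
        + ((1 - t) * orient a₁ a₂ a₄) • homog a₃ := by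
  have hsum : (1 - t) * orient a₂ a₃ a₄ + t * orient a₁ a₂ a₃ + (1 - t) * orient a₁ a₂ a₄
      = orient a₁ a₂ a₃ + (1 - t) * orient a₁ a₃ a₄ := by
    linear_combination (1 - t) * orient_alternating_sum a₁ a₂ a₃ a₄
  rw [← hsum]
  refine smul_homog_lineInter (γ := orient a₁ a₂ a₃) (δ := (1 - t) * orient a₁ a₃ a₄) ?_ ?_ ?_
  · linear_combination (norm := module)
      (1 - t) • orient_smul_homog_alternating_sum a₁ a₂ a₃ a₄ - orient a₁ a₂ a₃ • hb
  · rw [hsum]; nlinarith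
  · rw [orient_swap]; exact neg_ne_zero.2 h₁₂₃.ne'

theorem smul_homog_lineInter_diagonals {c : ℝ × ℝ} {S α β : ℝ}
    (hc : S • homog c = α • homog a₁ + β • homog a₃) (hα : α ≠ 0)
    (h₂₃₄ : 0 < orient a₂ a₃ a₄) (h₁₃₄ : 0 < orient a₁ a₃ a₄) (h₁₂₃ : 0 < orient a₁ a₂ a₃) :
    (orient a₁ a₃ a₄ + orient a₁ a₂ a₃) • homog (lineInter a₂ a₄ c a₃) =
      orient a₁ a₃ a₄ • homog a₂ + orient a₁ a₂ a₃ • homog a₄ := by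
  have key := smul_homog_lineInter (a := a₂) (b := a₄) (c := c) (d := a₃)
    (α := α * orient a₁ a₃ a₄) (β := α * orient a₁ a₂ a₃)
    (γ := orient a₂ a₃ a₄ * S) (δ := α * orient a₁ a₂ a₄ - orient a₂ a₃ a₄ * β)
    (by linear_combination (norm := module) -orient a₂ a₃ a₄ • hc
      - α • orient_smul_homog_alternating_sum a₁ a₂ a₃ a₄)
    (by rw [← mul_add]; exact mul_ne_zero hα (by positivity))
    (by rw [orient_swap]; exact neg_ne_zero.2 h₂₃₄.ne')
  apply smul_right_injective _ hα
  linear_combination (norm := module) key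

theorem exists_pmap_quadrilateral {c d : ℝ × ℝ} (hb : b = a₄ + t • (a₁ - a₄))
    (hc : c = lineInter a₁ a₃ b a₂) (hd : d = lineInter a₂ a₄ c a₃)
    (h₂₃₄ : 0 < orient a₂ a₃ a₄) (h₁₃₄ : 0 < orient a₁ a₃ a₄) (h₁₂₄ : 0 < orient a₁ a₂ a₄)
    (h₁₂₃ : 0 < orient a₁ a₂ a₃) (ht : t ∈ Set.Ioo 0 1) :
    ∃ g : (Fin 3 → ℝ) ≃ₗ[ℝ] (Fin 3 → ℝ), pmap g (emb a₁) = emb a₃ ∧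
      pmap g (emb a₂) = emb a₄ ∧ pmap g (emb a₃) = emb b ∧ pmap g (emb a₄) = emb c ∧
      pmap g (emb b) = emb d := by
  obtain ⟨ht₀, ht₁⟩ := ht
  have hb' : homog b = (1 - t) • homog a₄ + t • homog a₁ := hb ▸ homog_add_smul_sub a₄ a₁ t
  have hc' := hc ▸ smul_homog_lineInter_side hb' h₁₃₄ h₁₂₃ ht₁
  have hW : 0 < (1 - t) * orient a₂ a₃ a₄ + t * orient a₁ a₂ a₃ := by nlinarith
  have hd' := hd ▸ smul_homog_lineInter_diagonals hc' hW.ne' h₂₃₄ h₁₃₄ h₁₂₃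
  set x := orient a₂ a₃ a₄
  set y := orient a₁ a₃ a₄
  set z := orient a₁ a₂ a₄
  set w := orient a₁ a₂ a₃
  set W := (1 - t) * x + t * w with hW_def
  have hli : LinearIndependent ℝ ![homog a₃, homog a₄, homog b] := by
    refine linearIndependent_homog (ne_of_gt ?_)
    have : orient a₃ a₄ b = t * y := by
      subst hb
      simp only [y, orient, det2, Prod.fst_add, Prod.snd_add, Prod.fst_sub, Prod.snd_sub,
        Prod.smul_fst, Prod.smul_snd, smul_eq_mul]
      ring
    rw [this]; positivity
  -- The scalars make `x • g u₁ - y • g u₂ + z • g u₃ = w • g u₄` a multiple of `c`.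
  obtain ⟨g, hg⟩ := exists_linearEquiv_apply_eq_smul (linearIndependent_homog h₁₂₃.ne') hli
    (by simp) ![t * (1 - t) * y * z ^ 2, (1 - t) * x * z * W, x * y * W]
    (by intro i; fin_cases i <;> simp [ht₀.ne', sub_ne_zero.2 ht₁.ne', h₂₃₄.ne', h₁₃₄.ne',
      h₁₂₄.ne', hW.ne'])
  have hg₁ : g (homog a₁) = (t * (1 - t) * y * z ^ 2) • homog a₃ := hg 0
  have hg₂ : g (homog a₂) = ((1 - t) * x * z * W) • homog a₄ := hg 1
  have hg₃ : g (homog a₃) = (x * y * W) • homog b := hg 2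
  have hg₄ : w • g (homog a₄) =
      (t * x * y * z) • (W • homog a₁ + ((1 - t) * z) • homog a₃) := by
    have : w • homog a₄ = x • homog a₁ - y • homog a₂ + z • homog a₃ := by
      linear_combination (norm := module) -orient_smul_homog_alternating_sum a₁ a₂ a₃ a₄
    rw [← map_smul, this, map_add, map_sub, map_smul, map_smul, map_smul, hg₁, hg₂, hg₃]
    linear_combination (norm := module) (x * y * z * W) • hb'
  have hgb : w • g (homog b) = (t * (1 - t) * y * z * W) • ((y + w) • homog d) := by
    rw [hb', map_add, map_smul, map_smul, hg₁]
    linear_combination (norm := module) (1 - t) • hg₄ - (t * (1 - t) * y * z * W) • hd'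
      + (t * (1 - t) * y * z * W) • orient_smul_homog_alternating_sum a₁ a₂ a₃ a₄
      - hW_def • ((t * (1 - t) * y * z ^ 2) • homog a₃)
  refine ⟨g, ?_, ?_, ?_, ?_, ?_⟩
  · exact pmap_emb_eq_of_smul_apply g one_ne_zero (by rw [one_smul, hg₁])
  · exact pmap_emb_eq_of_smul_apply g one_ne_zero (by rw [one_smul, hg₂])
  · exact pmap_emb_eq_of_smul_apply g one_ne_zero (by rw [one_smul, hg₃])
  · exact pmap_emb_eq_of_smul_apply g h₁₂₃.ne' (by rw [hg₄, ← hc', smul_smul])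
  · exact pmap_emb_eq_of_smul_apply g h₁₂₃.ne' (by rw [hgb, smul_smul])

end Quadrilateral

theorem seedMap_four_one_iterate_two (A B : ℕ → ℝ × ℝ) :
    ((seedMap 4 1)^[2] (A, B)).1 1 = A 3 ∧ ((seedMap 4 1)^[2] (A, B)).1 2 = A 4 ∧
      ((seedMap 4 1)^[2] (A, B)).1 3 = B 4 ∧
      ((seedMap 4 1)^[2] (A, B)).1 4 = lineInter (A 1) (A 3) (B 4) (A 2) ∧
      ((seedMap 4 1)^[2] (A, B)).2 4 =
        lineInter (A 2) (A 4) (lineInter (A 1) (A 3) (B 4) (A 2)) (A 3) := by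
  simp [seedMap, BstAux]

/-- **`T_{4,1}^2` is the identity on the space `C(4,1)` of projective classes of
seeds of type `(4,1)`.**  For every seed `S = (A,B)` of type `(4,1)`, there is a
projective transformation `g` of `ℝP²` carrying each point of `S` (embedded in
`ℝP²`) to the corresponding point of `T_{4,1}^2(S)`. -/
theorem seedMap_4_1_pow_2_projectively_identity (A B : ℕ → ℝ × ℝ)
    (hS : IsSeed 4 1 A B) :
    ∃ g : (Fin 3 → ℝ) ≃ₗ[ℝ] (Fin 3 → ℝ),
      (∀ i : ℕ, 1 ≤ i → i ≤ 4 →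
        pmap g (emb (A i)) = emb (((seedMap 4 1)^[2] (A, B)).1 i)) ∧
      (∀ j : ℕ, 4 - 1 + 1 ≤ j → j ≤ 4 →
        pmap g (emb (B j)) = emb (((seedMap 4 1)^[2] (A, B)).2 j)) := by
  obtain ⟨hconv, hB⟩ := hS
  obtain ⟨t, ht, hB₄⟩ := hB 4 le_rfl le_rfl
  obtain ⟨g, hg₁, hg₂, hg₃, hg₄, hg₅⟩ := exists_pmap_quadrilateral hB₄ rfl rfl
    (hconv 2 3 4 (by norm_num) (by norm_num) (by norm_num) le_rfl)
    (hconv 1 3 4 le_rfl (by norm_num) (by norm_num) le_rfl)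
    (hconv 1 2 4 le_rfl (by norm_num) (by norm_num) le_rfl)
    (hconv 1 2 3 le_rfl (by norm_num) (by norm_num) (by norm_num)) ht
  obtain ⟨h₁, h₂, h₃, h₄, h₅⟩ := seedMap_four_one_iterate_two A B
  refine ⟨g, fun i hi₁ hi₄ => ?_, fun j hj₁ hj₄ => ?_⟩
  · interval_cases i
    exacts [h₁ ▸ hg₁, h₂ ▸ hg₂, h₃ ▸ hg₃, h₄ ▸ hg₄]
  · obtain rfl : j = 4 := by omega
    exact h₅ ▸ hg₅
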